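/- arXiv:2603.10432 — 4 statements merged into one kernel-verified Lean document; each statement's English description precedes it below -/
import Mathlib

section
/- Let G be a connected graph with BFS layers L_i from a root s. For any i ≥ 0, if u, v ∈ L_i lie in the same connected component of G with the vertices of layers L_0, ..., L_{i-1} removed, and every 'part' (intersection of such a component with its lowest layer) has diameter at most ℓ in G, then there is a u-v path all of whose vertices lie in layers L_i through L_{i+ℓ+1}. -/
/-- `ReachWithin G S u v`: there is a `u`-`v` walk in `G` all of whose vertices lie in `S`. -/
def ReachWithin {V : Type*} (G : SimpleGraph V) (S : Set V) (u v : V) : Prop :=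
  ∃ p : G.Walk u v, ∀ x ∈ p.support, x ∈ S

section Aux

variable {V : Type*} {G : SimpleGraph V} {S : Set V}

lemma reachWithin_trans {u v w : V} (h1 : ReachWithin G S u v) (h2 : ReachWithin G S v w) :
    ReachWithin G S u w := by
  obtain ⟨p, hp⟩ := h1
  obtain ⟨q, hq⟩ := h2
  refine ⟨p.append q, fun x hx => ?_⟩
  rw [SimpleGraph.Walk.mem_support_append_iff] at hx
  rcases hx with hx | hx
  · exact hp x hx
  · exact hq x hx

lemma reachWithin_symm {u v : V} (h : ReachWithin G S u v) : ReachWithin G S v u := by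
  obtain ⟨p, hp⟩ := h
  exact ⟨p.reverse, fun x hx => hp x (by simpa using hx)⟩

lemma reachWithin_adj {u v : V} (h : G.Adj u v) (hu : u ∈ S) (hv : v ∈ S) :
    ReachWithin G S u v :=
  ⟨SimpleGraph.Walk.cons h .nil, by intro x hx; simp at hx; rcases hx with rfl | rfl <;> assumption⟩

lemma ReachWithin.start_mem {u v : V} (h : ReachWithin G S u v) : u ∈ S := by
  obtain ⟨p, hp⟩ := h; exact hp u p.start_mem_support

lemma ReachWithin.end_mem {u v : V} (h : ReachWithin G S u v) : v ∈ S := by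
  obtain ⟨p, hp⟩ := h; exact hp v p.end_mem_support

/-- Anchor: any vertex at layer `≥ m` has an "ancestor" at layer `m`, connected to it
within layers `≥ m`. -/
lemma exists_anchor (hconn : G.Connected) (s : V) (m : ℕ) :
    ∀ n, m ≤ n → ∀ w : V, G.dist s w = n →
      ∃ w', G.dist s w' = m ∧ ReachWithin G {x | m ≤ G.dist s x} w' w := by
  intro n hn
  induction n, hn using Nat.le_induction with
  | base =>
    intro w hw
    exact ⟨w, hw, ⟨.nil, by intro x hx; simp at hx; subst hx; simp [hw]⟩⟩
  | succ n hmn ih =>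
    intro w hw
    obtain ⟨p, hp⟩ := hconn.exists_walk_length_eq_dist s w
    rw [hw] at hp
    cases hq : p.reverse with
    | nil =>
      exfalso
      have := congrArg SimpleGraph.Walk.length hq
      simp [hp] at this
    | @cons _ y _ hadj q =>
      -- hadj : G.Adj w y, q : G.Walk y s
      have hlen : q.length = n := by
        have := congrArg SimpleGraph.Walk.length hq
        simp [hp] at this
        omega
      have hy_le : G.dist s y ≤ n := by
        have := SimpleGraph.dist_le q.reverse
        simpa [hlen, SimpleGraph.dist_comm] using this
      have hy_ge : n ≤ G.dist s y := by
        obtain ⟨r, hr⟩ := hconn.exists_walk_length_eq_dist s y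
        have := SimpleGraph.dist_le (r.concat hadj.symm)
        rw [SimpleGraph.Walk.length_concat, hr, hw] at this
        omega
      have hy : G.dist s y = n := le_antisymm hy_le hy_ge
      obtain ⟨w', hw', hr⟩ := ih y hy
      refine ⟨w', hw', reachWithin_trans hr (reachWithin_adj hadj.symm ?_ ?_)⟩
      · simp [hy]; omega
      · simp [hw]; omega

/-- Two vertices at layer `m = i + ℓ/2` that are connected within layers `≥ m` are
connected within layers `[i, i+ℓ]`. -/
lemma short_connect (hconn : G.Connected) (s : V) (ℓ : ℕ)
    (hparts : ∀ (k : ℕ) (a b : V), G.dist s a = k → G.dist s b = k →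
      ReachWithin G {x | k ≤ G.dist s x} a b → G.dist a b ≤ ℓ)
    (i : ℕ) (a b : V) (ha : G.dist s a = i + ℓ / 2) (hb : G.dist s b = i + ℓ / 2)
    (hr : ReachWithin G {x | i + ℓ / 2 ≤ G.dist s x} a b) :
    ReachWithin G {x | i ≤ G.dist s x ∧ G.dist s x ≤ i + ℓ} a b := by
  classical
  have hd : G.dist a b ≤ ℓ := hparts _ a b ha hb hr
  obtain ⟨p, hp⟩ := (hconn a b).exists_walk_length_eq_dist
  refine ⟨p, fun x hx => ?_⟩
  have h1 : G.dist a x ≤ (p.takeUntil x hx).length := SimpleGraph.dist_le _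
  have h2 : G.dist x b ≤ (p.dropUntil x hx).length := SimpleGraph.dist_le _
  have h3 : (p.takeUntil x hx).length + (p.dropUntil x hx).length = p.length := by
    rw [← SimpleGraph.Walk.length_append, SimpleGraph.Walk.take_spec]
  have hsum : G.dist a x + G.dist x b ≤ ℓ := by omega
  have t1 : G.dist s x ≤ G.dist s a + G.dist a x := hconn.dist_triangle
  have t2 : G.dist s a ≤ G.dist s x + G.dist x a := hconn.dist_triangle
  have t3 : G.dist s x ≤ G.dist s b + G.dist b x := hconn.dist_triangle
  have t4 : G.dist s b ≤ G.dist s x + G.dist x b := hconn.dist_triangle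
  have c1 : G.dist x a = G.dist a x := SimpleGraph.dist_comm
  have c2 : G.dist b x = G.dist x b := SimpleGraph.dist_comm
  constructor <;> omega

/-- `LayerRep G s m x x'`: `x'` is the canonical representative of `x` for anchoring level `m`:
`x` itself if at layer `≤ m`, otherwise an anchor at layer `m`. -/
def LayerRep (G : SimpleGraph V) (s : V) (m : ℕ) (x x' : V) : Prop :=
  (G.dist s x ≤ m ∧ x' = x) ∨
    (m < G.dist s x ∧ G.dist s x' = m ∧ ReachWithin G {y | m ≤ G.dist s y} x' x)

lemma step_connect (hconn : G.Connected) (s : V) (ℓ : ℕ)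
    (hparts : ∀ (k : ℕ) (a b : V), G.dist s a = k → G.dist s b = k →
      ReachWithin G {x | k ≤ G.dist s x} a b → G.dist a b ≤ ℓ)
    (i : ℕ) {a c a' c' : V} (hadj : G.Adj a c)
    (hai : i ≤ G.dist s a) (hci : i ≤ G.dist s c)
    (ha' : LayerRep G s (i + ℓ / 2) a a') (hc' : LayerRep G s (i + ℓ / 2) c c') :
    ReachWithin G {x | i ≤ G.dist s x ∧ G.dist s x ≤ i + ℓ} a' c' := by
  set m := i + ℓ / 2 with hm
  have hac : G.dist s c ≤ G.dist s a + 1 := by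
    have := hconn.dist_triangle (u := s) (v := a) (w := c)
    simp [SimpleGraph.dist_eq_one_iff_adj.mpr hadj] at this
    exact this
  have hca : G.dist s a ≤ G.dist s c + 1 := by
    have := hconn.dist_triangle (u := s) (v := c) (w := a)
    simp [SimpleGraph.dist_eq_one_iff_adj.mpr hadj.symm] at this
    exact this
  rcases ha' with ⟨hal, haeq⟩ | ⟨hah, ha'm, ha'r⟩
  · subst haeq
    rcases hc' with ⟨hcl, hceq⟩ | ⟨hch, hc'm, hc'r⟩
    · subst hceq
      -- both low: the edge itself works
      refine reachWithin_adj hadj ⟨hai, by omega⟩ ⟨hci, by omega⟩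
    · -- a low, c high: dist s a = m
      have ham : G.dist s a' = m := by omega
      refine short_connect hconn s ℓ hparts i a' c' ham hc'm ?_
      refine reachWithin_trans (reachWithin_adj hadj ?_ ?_) (reachWithin_symm hc'r)
      · simp [ham]; omega
      · simp; omega
  · rcases hc' with ⟨hcl, hceq⟩ | ⟨hch, hc'm, hc'r⟩
    · subst hceq
      have hcm : G.dist s c' = m := by omega
      refine short_connect hconn s ℓ hparts i a' c' ha'm hcm ?_
      refine reachWithin_trans ha'r (reachWithin_adj hadj ?_ ?_)
      · simp; omega
      · simp [hcm]; omega
    · refine short_connect hconn s ℓ hparts i a' c' ha'm hc'm ?_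
      refine reachWithin_trans ha'r
        (reachWithin_trans (reachWithin_adj hadj ?_ ?_) (reachWithin_symm hc'r))
      · simp; omega
      · simp; omega

lemma main_connect (hconn : G.Connected) (s : V) (ℓ : ℕ)
    (hparts : ∀ (k : ℕ) (a b : V), G.dist s a = k → G.dist s b = k →
      ReachWithin G {x | k ≤ G.dist s x} a b → G.dist a b ≤ ℓ)
    (i : ℕ) {a b : V} (p : G.Walk a b) :
    (∀ x ∈ p.support, i ≤ G.dist s x) → ∀ a' b',
      LayerRep G s (i + ℓ / 2) a a' → LayerRep G s (i + ℓ / 2) b b' →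
      ReachWithin G {x | i ≤ G.dist s x ∧ G.dist s x ≤ i + ℓ} a' b' := by
  set m := i + ℓ / 2 with hm
  induction p with
  | @nil a =>
    intro hp a' b' ha' hb'
    have hai : i ≤ G.dist s a := hp a (by simp)
    rcases ha' with ⟨hal, haeq⟩ | ⟨hah, ha'm, ha'r⟩
    · subst haeq
      rcases hb' with ⟨hbl, hbeq⟩ | ⟨hbh, hb'm, hb'r⟩
      · subst hbeq
        exact ⟨.nil, by intro x hx; simp at hx; subst hx; exact ⟨hai, by omega⟩⟩
      · have ham : G.dist s a' = m := by omega
        exact short_connect hconn s ℓ hparts i a' b' ham hb'm (reachWithin_symm hb'r)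
    · rcases hb' with ⟨hbl, hbeq⟩ | ⟨hbh, hb'm, hb'r⟩
      · subst hbeq
        have ham : G.dist s b' = m := by omega
        exact short_connect hconn s ℓ hparts i a' b' ha'm ham ha'r
      · exact short_connect hconn s ℓ hparts i a' b' ha'm hb'm
          (reachWithin_trans ha'r (reachWithin_symm hb'r))
  | @cons a c b hadj q ih =>
    intro hp a' b' ha' hb'
    have hai : i ≤ G.dist s a := hp a (by simp)
    have hci : i ≤ G.dist s c := hp c (by simp)
    have hq : ∀ x ∈ q.support, i ≤ G.dist s x := fun x hx => hp x (by simp [hx])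
    -- find a representative for c
    obtain ⟨c₀, hc₀⟩ : ∃ c₀, LayerRep G s m c c₀ := by
      by_cases hcm : G.dist s c ≤ m
      · exact ⟨c, Or.inl ⟨hcm, rfl⟩⟩
      · obtain ⟨c₀, h1, h2⟩ := exists_anchor hconn s m (G.dist s c) (by omega) c rfl
        exact ⟨c₀, Or.inr ⟨by omega, h1, h2⟩⟩
    exact reachWithin_trans
      (step_connect hconn s ℓ hparts i hadj hai hci ha' hc₀)
      (ih hq c₀ b' hc₀ hb')

end Aux

/-- Key structural lemma: if every part of the BFS layering of `G` from `s` has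
`G`-diameter at most `ℓ` (vertices `a, b` at layer `k` connected within layers `≥ k` are
at distance at most `ℓ`), and `u, v` at layer `i` lie in the same connected component of
`G` minus the first `i` layers, then there is a `u`-`v` path all of whose vertices lie
in layers `i` through `i + ℓ + 1`. -/
theorem same_part_connected_within_few_layers {V : Type*} (G : SimpleGraph V)
    (hconn : G.Connected) (s : V) (ℓ : ℕ)
    (hparts : ∀ (k : ℕ) (a b : V), G.dist s a = k → G.dist s b = k →
      ReachWithin G {x | k ≤ G.dist s x} a b → G.dist a b ≤ ℓ)
    (i : ℕ) (u v : V) (hu : G.dist s u = i) (hv : G.dist s v = i)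
    (huv : ReachWithin G {x | i ≤ G.dist s x} u v) :
    ∃ p : G.Walk u v, ∀ x ∈ p.support, i ≤ G.dist s x ∧ G.dist s x ≤ i + ℓ + 1 := by
  obtain ⟨p, hp⟩ := huv
  have h := main_connect hconn s ℓ hparts i p hp u v
    (Or.inl ⟨by omega, rfl⟩) (Or.inl ⟨by omega, rfl⟩)
  obtain ⟨q, hq⟩ := h
  exact ⟨q, fun x hx => ⟨(hq x hx).1, by have := (hq x hx).2; omega⟩⟩
end

section
/- Let G be a connected graph with BFS layering from s and layering tree 𝒯 whose parts all have diameter at most ℓ in G. Let P be a part at layer k and let i ≥ k. Then the number of vertices of comp(P) lying in layers L_0, ..., L_i is at most Δ^{ℓ + i - k + 2}, where Δ ≥ 2 is the maximum degree of G. -/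
namespace ReachWithin

variable {V : Type*} {G : SimpleGraph V} {S : Set V} {u v w : V}

lemma reachable (h : ReachWithin G S u v) : G.Reachable u v :=
  let ⟨p, _⟩ := h; ⟨p⟩

lemma mem_right (h : ReachWithin G S u v) : v ∈ S :=
  let ⟨p, hp⟩ := h; hp v p.end_mem_support

lemma symm (h : ReachWithin G S u v) : ReachWithin G S v u :=
  let ⟨p, hp⟩ := h; ⟨p.reverse, fun x hx => hp x (by simpa using hx)⟩

lemma trans (huv : ReachWithin G S u v) (hvw : ReachWithin G S v w) : ReachWithin G S u w :=
  let ⟨p, hp⟩ := huv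
  let ⟨q, hq⟩ := hvw
  ⟨p.append q, fun x hx => (p.mem_support_append_iff q).mp hx |>.elim (hp x) (hq x)⟩

lemma concat (h : ReachWithin G S u v) (hvw : G.Adj v w) (hw : w ∈ S) : ReachWithin G S u w :=
  let ⟨p, hp⟩ := h
  ⟨p.concat hvw, fun x hx => by
    rw [p.support_concat hvw, List.mem_append, List.mem_singleton] at hx
    exact hx.elim (hp x) (· ▸ hw)⟩

end ReachWithin

namespace SimpleGraph

variable {V : Type*} {G : SimpleGraph V}

lemma exists_adj_dist_eq_of_dist_eq_succ {s v : V} {m : ℕ} (h : G.dist s v = m + 1) :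
    ∃ x, G.Adj x v ∧ G.dist s x = m := by
  obtain ⟨p, hp⟩ := exists_walk_of_dist_ne_zero (h ▸ m.succ_ne_zero : G.dist s v ≠ 0)
  have hvs : v ≠ s := by rintro rfl; simp at h
  obtain ⟨x, hvx, q, hq⟩ := p.reverse.exists_eq_cons_of_ne hvs
  have hlen : q.length = m := by
    have := congrArg Walk.length hq
    rw [Walk.length_reverse, hp, h, Walk.length_cons] at this
    omega
  refine ⟨x, hvx.symm, le_antisymm ?_ ?_⟩
  · simpa [hlen] using dist_le q.reverse
  · have := hvx.symm.reachable.dist_triangle_right s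
    rw [dist_eq_one_iff_adj.mpr hvx.symm] at this
    omega

lemma exists_dist_eq_reachWithin_of_le_dist {s v : V} {k : ℕ} (hk : k ≤ G.dist s v) :
    ∃ w, G.dist s w = k ∧ G.edist w v ≤ ↑(G.dist s v - k) ∧
      ReachWithin G {x | k ≤ G.dist s x} w v := by
  obtain ⟨n, hn⟩ := Nat.exists_eq_add_of_le hk
  rw [hn, Nat.add_sub_cancel_left]
  clear hk
  induction n generalizing v with
  | zero => exact ⟨v, hn, by simp, ⟨Walk.nil, by simp [hn]⟩⟩
  | succ n ih =>
    obtain ⟨x, hxv, hx⟩ := exists_adj_dist_eq_of_dist_eq_succ (m := k + n) hn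
    obtain ⟨w, hw, hwx, hreach⟩ := ih hx
    refine ⟨w, hw, ?_, hreach.concat hxv (by simp [hn])⟩
    calc G.edist w v ≤ G.edist w x + G.edist x v := SimpleGraph.edist_triangle
      _ ≤ n + 1 := by gcongr; exact (edist_eq_one_iff_adj.mpr hxv).le
      _ = ↑(n + 1) := by push_cast; rfl

lemma ball_add_one_subset (c : V) (n : ℕ) :
    G.ball c (n + 1) ⊆ insert c (⋃ x ∈ G.neighborSet c, G.ball x n) := by
  intro v hv
  rcases eq_or_ne c v with rfl | hcv
  · exact Set.mem_insert _ _
  rw [mem_ball, edist_comm] at hv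
  obtain ⟨p, hp⟩ := exists_walk_of_edist_ne_top (ne_top_of_lt hv)
  obtain ⟨x, hcx, q, rfl⟩ := p.exists_eq_cons_of_ne hcv
  have hq : q.length < n := by
    have : ((q.length + 1 : ℕ) : ℕ∞) < (n + 1 : ℕ) := by simpa [← hp] using hv
    exact Nat.succ_lt_succ_iff.mp (by exact_mod_cast this)
  refine Set.mem_insert_of_mem _ (Set.mem_biUnion hcx ?_)
  rw [mem_ball, edist_comm]
  exact (edist_le q).trans_lt (by exact_mod_cast hq)

variable [Fintype V] [DecidableRel G.Adj]

/-- `G.ball c n` is the closed ball of radius `n - 1`; it has at most `1 + Δ + ⋯ + Δ ^ (n - 1)`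
vertices. -/
theorem ncard_ball_lt_pow {Δ : ℕ} (hΔ2 : 2 ≤ Δ) (hΔ : G.maxDegree ≤ Δ) (c : V) :
    ∀ n : ℕ, (G.ball c n).ncard < Δ ^ n
  | 0 => by simp
  | n + 1 => by
    have ih := fun x => ncard_ball_lt_pow hΔ2 hΔ x n
    have hdeg : G.degree c ≤ Δ := (G.degree_le_maxDegree c).trans hΔ
    have hsum : ∑ x ∈ G.neighborFinset c, (G.ball x n).ncard ≤ Δ * (Δ ^ n - 1) :=
      calc _ ≤ (G.neighborFinset c).card • (Δ ^ n - 1) :=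
            Finset.sum_le_card_nsmul _ _ _ fun x _ => Nat.le_sub_one_of_lt (ih x)
        _ ≤ Δ * (Δ ^ n - 1) := by rw [card_neighborFinset_eq_degree, smul_eq_mul]; gcongr
    calc (G.ball c ↑(n + 1)).ncard
        ≤ (insert c (⋃ x ∈ G.neighborFinset c, G.ball x n)).ncard := by
          refine Set.ncard_le_ncard ?_ (Set.toFinite _)
          simpa using ball_add_one_subset c n
      _ ≤ (⋃ x ∈ G.neighborFinset c, G.ball x n).ncard + 1 := Set.ncard_insert_le _ _
      _ ≤ Δ * (Δ ^ n - 1) + 1 := by gcongr; exact (Finset.set_ncard_biUnion_le _ _).trans hsum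
      _ < Δ ^ (n + 1) := by
          obtain ⟨m, hm⟩ : ∃ m, Δ ^ n = m + 1 :=
            ⟨Δ ^ n - 1, (Nat.sub_add_cancel (Nat.one_le_pow _ _ (by omega))).symm⟩
          rw [pow_succ, hm, Nat.add_sub_cancel]
          nlinarith

end SimpleGraph

theorem comp_inter_low_layers_card_le_general {V : Type*} [Fintype V] (G : SimpleGraph V)
    [DecidableRel G.Adj] (s : V) (Δ ℓ : ℕ) (hΔ2 : 2 ≤ Δ)
    (hΔ : G.maxDegree ≤ Δ)
    (hparts : ∀ (m : ℕ) (a b : V), G.dist s a = m → G.dist s b = m →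
      ReachWithin G {x | m ≤ G.dist s x} a b → G.dist a b ≤ ℓ)
    (k i : ℕ) (u : V) (hu : G.dist s u = k) :
    {v : V | ReachWithin G {x | k ≤ G.dist s x} u v ∧ G.dist s v ≤ i}.ncard
      ≤ Δ ^ (ℓ + (i - k) + 2) := by
  have hsub : {v : V | ReachWithin G {x | k ≤ G.dist s x} u v ∧ G.dist s v ≤ i} ⊆
      G.ball u ↑(ℓ + (i - k) + 1) := by
    rintro v ⟨huv, hvi⟩
    obtain ⟨w, hw, hwv, hreach⟩ :=
      SimpleGraph.exists_dist_eq_reachWithin_of_le_dist huv.mem_right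
    have huw := huv.trans hreach.symm
    have huw_le : G.edist u w ≤ ℓ := by
      rw [← huw.reachable.coe_dist_eq_edist]
      exact_mod_cast hparts k u w hu hw huw
    have hwv_le : G.edist w v ≤ ↑(i - k) := hwv.trans (by gcongr)
    rw [SimpleGraph.mem_ball, SimpleGraph.edist_comm]
    calc G.edist u v ≤ G.edist u w + G.edist w v := SimpleGraph.edist_triangle
      _ ≤ ↑(ℓ + (i - k)) := (add_le_add huw_le hwv_le).trans_eq (Nat.cast_add _ _).symm
      _ < ↑(ℓ + (i - k) + 1) := by exact_mod_cast Nat.lt_succ_self _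
  calc _ ≤ (G.ball u ↑(ℓ + (i - k) + 1)).ncard := Set.ncard_le_ncard hsub (Set.toFinite _)
    _ ≤ Δ ^ (ℓ + (i - k) + 1) := (SimpleGraph.ncard_ball_lt_pow hΔ2 hΔ u _).le
    _ ≤ Δ ^ (ℓ + (i - k) + 2) := Nat.pow_le_pow_right (by omega) (by omega)

/-- If every part of the BFS layering of `G` from `s` has `G`-diameter at most `ℓ`, `G`
has maximum degree at most `Δ` with `Δ ≥ 2`, and `P` is the part at layer `k` containing
`u`, then the number of vertices of `comp(P)` (the component of `G` minus the first `k`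
layers containing `u`) lying in layers `0, …, i` is at most `Δ ^ (ℓ + (i - k) + 2)`. -/
theorem comp_inter_low_layers_card_le {V : Type*} [Fintype V] (G : SimpleGraph V)
    [DecidableRel G.Adj] (hconn : G.Connected) (s : V) (Δ ℓ : ℕ) (hΔ2 : 2 ≤ Δ)
    (hΔ : G.maxDegree ≤ Δ)
    (hparts : ∀ (m : ℕ) (a b : V), G.dist s a = m → G.dist s b = m →
      ReachWithin G {x | m ≤ G.dist s x} a b → G.dist a b ≤ ℓ)
    (k i : ℕ) (hik : k ≤ i) (u : V) (hu : G.dist s u = k) :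
    {v : V | ReachWithin G {x | k ≤ G.dist s x} u v ∧ G.dist s v ≤ i}.ncard
      ≤ Δ ^ (ℓ + (i - k) + 2) :=
  comp_inter_low_layers_card_le_general G s Δ ℓ hΔ2 hΔ hparts k i u hu
end

section
/- Let G be a connected graph, P a part at layer k of its BFS layering from s, and let v ∈ comp(P) ∩ L_i for some i ≥ k. Then v is at distance at most i − k from some vertex of P, where distance is measured within the induced subgraph on comp(P). -/
/-- Any vertex at positive distance from `s` has a neighbor one step closer. -/
lemma exists_adj_dist_pred {V : Type*} (G : SimpleGraph V) (hconn : G.Connected)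
    (s v : V) (i : ℕ) (hvi : G.dist s v = i + 1) :
    ∃ b : V, G.Adj v b ∧ G.dist s b = i := by
  have hd : G.dist v s = i + 1 := by rw [G.dist_comm]; exact hvi
  obtain ⟨q, hq⟩ := hconn.exists_walk_length_eq_dist v s
  have hlen : q.length = i + 1 := by rw [hq, hd]
  cases q with
  | nil => simp at hlen
  | cons h q' =>
    rename_i b
    refine ⟨b, h, ?_⟩
    have h1 : G.dist s b ≤ i := by
      have hql : q'.length = i := by
        have := SimpleGraph.Walk.length_cons h q'
        omega
      calc G.dist s b = G.dist b s := G.dist_comm ..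
        _ ≤ q'.length := SimpleGraph.dist_le q'
        _ = i := hql
    have h2 : G.dist s v ≤ G.dist s b + 1 := by
      obtain ⟨r, hr⟩ := hconn.exists_walk_length_eq_dist s b
      have := SimpleGraph.dist_le (r.append (SimpleGraph.Walk.cons h.symm SimpleGraph.Walk.nil))
      rw [SimpleGraph.Walk.length_append] at this
      simp only [SimpleGraph.Walk.length_cons, SimpleGraph.Walk.length_nil] at this
      omega
    omega

/-- If `P` is the part at layer `k` containing `u` and `v ∈ comp(P) ∩ L_i` with `i ≥ k`,
then `v` is at distance at most `i - k`, measured within the induced subgraph on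
`comp(P)`, from some vertex `w` of `P`. -/
theorem comp_vertex_close_to_part {V : Type*} (G : SimpleGraph V) (hconn : G.Connected)
    (s : V) (k i : ℕ) (hik : k ≤ i) (u v : V) (hu : G.dist s u = k)
    (hv : ReachWithin G {x | k ≤ G.dist s x} u v) (hvi : G.dist s v = i) :
    ∃ w : V, G.dist s w = k ∧ ReachWithin G {x | k ≤ G.dist s x} u w ∧
      ∃ p : G.Walk v w, p.length ≤ i - k ∧
        ∀ x ∈ p.support, ReachWithin G {y | k ≤ G.dist s y} u x := by
  induction i, hik using Nat.le_induction generalizing v with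
  | base =>
    refine ⟨v, hvi, hv, SimpleGraph.Walk.nil, by simp, ?_⟩
    intro x hx
    simp only [SimpleGraph.Walk.support_nil, List.mem_singleton] at hx
    subst hx; exact hv
  | succ i hki ih =>
    obtain ⟨b, hadj, hb⟩ := exists_adj_dist_pred G hconn s v i hvi
    have hvb : ReachWithin G {x | k ≤ G.dist s x} u b := by
      obtain ⟨r, hr⟩ := hv
      refine ⟨r.append (SimpleGraph.Walk.cons hadj SimpleGraph.Walk.nil), ?_⟩
      intro x hx
      rw [SimpleGraph.Walk.mem_support_append_iff] at hx
      rcases hx with hx | hx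
      · exact hr x hx
      · simp only [SimpleGraph.Walk.support_cons, SimpleGraph.Walk.support_nil,
          List.mem_cons, List.mem_singleton] at hx
        rcases hx with rfl | rfl | h
        · exact hr x (SimpleGraph.Walk.end_mem_support r)
        · show k ≤ G.dist s x
          omega
        · exact absurd h List.not_mem_nil
    obtain ⟨w, hw, hrw, pw, hlen, hsup⟩ := ih b hvb hb
    refine ⟨w, hw, hrw, SimpleGraph.Walk.cons hadj pw, ?_, ?_⟩
    · simp only [SimpleGraph.Walk.length_cons]
      omega
    · intro x hx
      simp only [SimpleGraph.Walk.support_cons, List.mem_cons] at hx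
      rcases hx with rfl | hx
      · exact hv
      · exact hsup x hx
end

section
/- Let G be a connected graph with BFS layering from s, and suppose π is a path from u to v avoiding L_0, ..., L_{k-1} with u, v ∈ L_k, and suppose π contains a vertex t ∈ L_{k+r} for some r ≥ 1. Then for any μ with 0 ≤ μ ≤ r, there exist vertices x, y ∈ L_{k+μ} on π such that the subpath of π between x and y avoids L_0 ∪ ... ∪ L_{k+μ-1}; in particular x and y lie in the same part at layer k+μ. -/
/-- The part at layer `m` containing `u`. -/
def LayerPart {V : Type*} (G : SimpleGraph V) (s : V) (m : ℕ) (u : V) : Set V :=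
  {v | G.dist s v = m ∧ ReachWithin G {x | m ≤ G.dist s x} u v}

/-!
Split `π` at `t`. Along each half, read from `t` towards the endpoint in `L_k`, the layer
index drops by at most one per edge, so it first reaches `L_{k+μ}` at some vertex (`x` on
the `u` side, `y` on the `v` side) having stayed in layers `≥ k+μ` until then. The two
initial pieces, glued at `t`, form the required walk from `x` to `y`.
-/

namespace SimpleGraph

variable {V : Type*} {G : SimpleGraph V}

lemma Adj.dist_le_dist_add_one (s : V) {a c : V} (h : G.Adj c a) :
    G.dist s a ≤ G.dist s c + 1 := by
  simpa [dist_eq_one_iff_adj.mpr h] using h.reachable.dist_triangle_right s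

lemma Walk.exists_walk_to_layer (s : V) (m : ℕ) {a b : V} (w : G.Walk a b)
    (ha : m ≤ G.dist s a) (hb : G.dist s b ≤ m) :
    ∃ x, G.dist s x = m ∧
      ∃ q : G.Walk a x, ∀ z ∈ q.support, z ∈ w.support ∧ m ≤ G.dist s z := by
  induction w with
  | nil => exact ⟨_, le_antisymm hb ha, .nil, by simp [ha]⟩
  | @cons a c b hadj w ih =>
    by_cases hc : m ≤ G.dist s c
    · obtain ⟨x, hx, q, hq⟩ := ih hc hb
      refine ⟨x, hx, .cons hadj q, ?_⟩
      rintro z (_ | ⟨_, hz⟩)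
      · exact ⟨w.support.mem_cons_self, ha⟩
      · exact (hq z hz).imp (List.mem_cons_of_mem a) id
    · have hac := hadj.symm.dist_le_dist_add_one s
      exact ⟨a, by omega, .nil, by simp [ha]⟩

end SimpleGraph

open SimpleGraph

theorem subpath_vertices_same_part_general {V : Type*} (G : SimpleGraph V)
    (s : V) (k r μ : ℕ) (hμ : μ ≤ r) (u v : V)
    (hu : G.dist s u = k) (hv : G.dist s v = k)
    (π : G.Walk u v)
    (t : V) (ht : t ∈ π.support) (htd : G.dist s t = k + r) :
    ∃ x ∈ π.support, ∃ y ∈ π.support,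
      G.dist s x = k + μ ∧ G.dist s y = k + μ ∧
      (∃ q : G.Walk x y, (∀ z ∈ q.support, z ∈ π.support) ∧
        ∀ z ∈ q.support, k + μ ≤ G.dist s z) ∧
      y ∈ LayerPart G s (k + μ) x := by
  classical
  obtain ⟨x, hx, q₁, hq₁⟩ :=
    (π.takeUntil t ht).reverse.exists_walk_to_layer s (k + μ) (by omega) (by omega)
  obtain ⟨y, hy, q₂, hq₂⟩ :=
    (π.dropUntil t ht).exists_walk_to_layer s (k + μ) (by omega) (by omega)
  set q := q₁.reverse.append q₂
  have hq : ∀ z ∈ q.support, z ∈ π.support ∧ k + μ ≤ G.dist s z := by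
    simp only [q, Walk.mem_support_append_iff, Walk.support_reverse, List.mem_reverse]
    rintro z (hz | hz)
    · refine (hq₁ z hz).imp (fun h => π.support_takeUntil_subset_support ht ?_) id
      simpa using h
    · exact (hq₂ z hz).imp (fun h => π.support_dropUntil_subset_support ht h) id
  refine ⟨x, (hq x q.start_mem_support).1, y, (hq y q.end_mem_support).1, hx, hy,
    ⟨q, fun z hz => (hq z hz).1, fun z hz => (hq z hz).2⟩, hy, q, fun z hz => (hq z hz).2⟩

/-- If `π` is a path from `u` to `v` (both in `L_k`) avoiding layers `< k` which contains
a vertex `t ∈ L_{k+r}` with `r ≥ 1`, then for any `μ ≤ r` there are vertices `x, y` of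
`π` in `L_{k+μ}` joined, within the vertices of `π`, by a walk avoiding layers
`< k + μ`; in particular `x` and `y` lie in the same part at layer `k + μ`. -/
theorem subpath_vertices_same_part {V : Type*} (G : SimpleGraph V) (hconn : G.Connected)
    (s : V) (k r μ : ℕ) (hr : 1 ≤ r) (hμ : μ ≤ r) (u v : V)
    (hu : G.dist s u = k) (hv : G.dist s v = k)
    (π : G.Walk u v) (hpath : π.IsPath) (hπ : ∀ z ∈ π.support, k ≤ G.dist s z)
    (t : V) (ht : t ∈ π.support) (htd : G.dist s t = k + r) :
    ∃ x ∈ π.support, ∃ y ∈ π.support,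
      G.dist s x = k + μ ∧ G.dist s y = k + μ ∧
      (∃ q : G.Walk x y, (∀ z ∈ q.support, z ∈ π.support) ∧
        ∀ z ∈ q.support, k + μ ≤ G.dist s z) ∧
      y ∈ LayerPart G s (k + μ) x :=
  subpath_vertices_same_part_general G s k r μ hμ u v hu hv π t ht htd
end
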